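/- arXiv:1309.4585 — 4 statements merged into one kernel-verified Lean document; each statement's English description precedes it below -/
import Mathlib

section
/- Let 0<q<1 and let a_1,…,a_r, b_1,…,b_s ≥ 0. Then: (1) if r>s there exists M≥0 such that f(x;q) is increasing for all x>M; (2) if r<s there exists M≥0 such that f(x;q) is decreasing for all x>M; (3) if Υ<0 (resp. Υ>0) there exists M≥0 such that g(x;q) is increasing (resp. decreasing) for all x>M. -/
/-!
For `x > 0` we have `Γ_q(x) = exp (logQGamma q x)` with
`logQGamma q x = log (q;q)_∞ - log (q^x;q)_∞ + (1 - x) log (1 - q)`, whose derivative is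
the q-digamma function `ψ_q(x) = -log (1 - q) + log q · ∑ₖ q^(x+k) / (1 - q^(x+k))`.
As `x → ∞`, `q^x → 0`, so `ψ_q(x) → -log (1 - q) > 0` and
`(ψ_q(x + c) + log (1 - q)) / q^x → q^c log q / (1 - q)`. Hence
`(log f)' → (s - r) log (1 - q)`, while `(log g)' = (r - s) log (1 - q) + (log f)'` is `q^x`
times a quantity tending to `Υ log q / (1 - q)`. The signs of these limits give the eventual
monotonicity.
-/

open Real Set

/-- The infinite q-Pochhammer symbol `(a;q)_∞ = ∏_{k≥0} (1 - a q^k)`. -/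
noncomputable def qPochInf (a q : ℝ) : ℝ := ∏' k : ℕ, (1 - a * q ^ k)

/-- Jackson's q-gamma function for `0 < q < 1`:
`Γ_q(x) = (q;q)_∞ / (q^x;q)_∞ · (1-q)^{1-x}`. -/
noncomputable def qGamma (q x : ℝ) : ℝ :=
  qPochInf q q / qPochInf (q ^ x) q * (1 - q) ^ (1 - x)

open Filter Topology

noncomputable def logQPochInf (q u : ℝ) : ℝ := ∑' k : ℕ, log (1 - u * q ^ k)

noncomputable def derivLogQPochInf (q u : ℝ) : ℝ := ∑' k : ℕ, -(q ^ k / (1 - u * q ^ k))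

lemma one_sub_le_one_sub_mul_pow {q ρ y : ℝ} (hq0 : 0 ≤ q) (hq1 : q ≤ 1) (hy : |y| ≤ ρ)
    (k : ℕ) : 1 - ρ ≤ 1 - y * q ^ k := by
  have hk : q ^ k ≤ 1 := pow_le_one₀ hq0 hq1
  have : y * q ^ k ≤ |y| := by
    calc y * q ^ k ≤ |y * q ^ k| := le_abs_self _
      _ = |y| * q ^ k := by rw [abs_mul, abs_of_nonneg (pow_nonneg hq0 k)]
      _ ≤ |y| := mul_le_of_le_one_right (abs_nonneg y) hk
  linarith

lemma norm_pow_div_one_sub_mul_pow_le {q ρ y : ℝ} (hq0 : 0 ≤ q) (hq1 : q ≤ 1) (hρ : ρ < 1)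
    (hy : |y| ≤ ρ) (k : ℕ) : ‖q ^ k / (1 - y * q ^ k)‖ ≤ (1 - ρ)⁻¹ * q ^ k := by
  have hle := one_sub_le_one_sub_mul_pow hq0 hq1 hy k
  rw [Real.norm_eq_abs, abs_of_nonneg (div_nonneg (pow_nonneg hq0 k) (by linarith)),
    ← div_eq_inv_mul]
  exact div_le_div_of_nonneg_left (pow_nonneg hq0 k) (by linarith) hle

lemma summable_log_one_sub_mul_pow {q : ℝ} (hq0 : 0 ≤ q) (hq1 : q < 1) (u : ℝ) :
    Summable fun k : ℕ => log (1 - u * q ^ k) := by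
  simpa [sub_eq_add_neg] using
    Real.summable_log_one_add_of_summable ((summable_geometric_of_lt_one hq0 hq1).mul_left (-u))

lemma qPochInf_eq_exp_logQPochInf {q u : ℝ} (hq0 : 0 ≤ q) (hq1 : q < 1) (hu : |u| < 1) :
    qPochInf u q = exp (logQPochInf q u) :=
  (Real.rexp_tsum_eq_tprod
    (fun k => by linarith [one_sub_le_one_sub_mul_pow hq0 hq1.le le_rfl k (y := u)])
    (summable_log_one_sub_mul_pow hq0 hq1 u)).symm

lemma hasDerivAt_logQPochInf {q u : ℝ} (hq0 : 0 ≤ q) (hq1 : q < 1) (hu : |u| < 1) :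
    HasDerivAt (logQPochInf q) (derivLogQPochInf q u) u := by
  set ρ := (1 + |u|) / 2 with hρdef
  have hρ : ρ < 1 := by linarith
  have hmem : ∀ {y}, y ∈ Ioo (-ρ) ρ → |y| ≤ ρ := fun hy => (abs_lt.2 hy).le
  refine hasDerivAt_tsum_of_isPreconnected
    ((summable_geometric_of_lt_one hq0 hq1).mul_left (1 - ρ)⁻¹) isOpen_Ioo
    isPreconnected_Ioo (fun k y hy => ?_)
    (fun k y hy => (norm_neg _).trans_le
      (norm_pow_div_one_sub_mul_pow_le hq0 hq1.le hρ (hmem hy) k))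
    (y₀ := u) (abs_lt.1 (by linarith [abs_nonneg u])) (summable_log_one_sub_mul_pow hq0 hq1 u)
    (abs_lt.1 (by linarith [abs_nonneg u]))
  have hpos : 0 < 1 - y * q ^ k := by
    linarith [one_sub_le_one_sub_mul_pow hq0 hq1.le (hmem hy) k]
  simpa [neg_div] using (((hasDerivAt_id y).mul_const (q ^ k)).const_sub 1).log hpos.ne'

lemma derivLogQPochInf_zero {q : ℝ} (hq0 : 0 ≤ q) (hq1 : q < 1) :
    derivLogQPochInf q 0 = -(1 - q)⁻¹ := by
  simp [derivLogQPochInf, tsum_neg, tsum_geometric_of_lt_one hq0 hq1]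

lemma continuousAt_derivLogQPochInf_zero {q : ℝ} (hq0 : 0 ≤ q) (hq1 : q < 1) :
    ContinuousAt (derivLogQPochInf q) 0 := by
  have hρ : (2⁻¹ : ℝ) < 1 := by norm_num
  refine (continuousOn_tsum (fun k => ?_)
    ((summable_geometric_of_lt_one hq0 hq1).mul_left (1 - 2⁻¹)⁻¹)
    (fun k y hy => (norm_neg _).trans_le
      (norm_pow_div_one_sub_mul_pow_le hq0 hq1.le hρ (abs_lt.2 hy).le k))).continuousAt
    (Ioo_mem_nhds (by norm_num) (by norm_num))
  refine (continuousOn_const.div (by fun_prop) fun y hy => ?_).neg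
  linarith [one_sub_le_one_sub_mul_pow hq0 hq1.le (abs_lt.2 hy).le k]

lemma tendsto_rpow_add_const_atTop {q : ℝ} (hq0 : -1 < q) (hq1 : q < 1) (c : ℝ) :
    Tendsto (fun x => q ^ (x + c)) atTop (𝓝 0) :=
  (tendsto_rpow_atTop_of_base_lt_one q hq0 hq1).comp (tendsto_atTop_add_const_right _ c tendsto_id)

lemma tendsto_derivLogQPochInf_rpow_atTop {q : ℝ} (hq0 : 0 < q) (hq1 : q < 1) (c : ℝ) :
    Tendsto (fun x => derivLogQPochInf q (q ^ (x + c))) atTop (𝓝 (-(1 - q)⁻¹)) := by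
  rw [← derivLogQPochInf_zero hq0.le hq1]
  exact (continuousAt_derivLogQPochInf_zero hq0.le hq1).tendsto.comp
    (tendsto_rpow_add_const_atTop (by linarith) hq1 c)

noncomputable def logQGamma (q x : ℝ) : ℝ :=
  logQPochInf q q - logQPochInf q (q ^ x) + (1 - x) * log (1 - q)

noncomputable def qDigamma (q x : ℝ) : ℝ :=
  -log (1 - q) - derivLogQPochInf q (q ^ x) * (q ^ x * log q)

lemma abs_rpow_lt_one {q x : ℝ} (hq0 : 0 < q) (hq1 : q < 1) (hx : 0 < x) : |q ^ x| < 1 := by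
  rw [abs_of_pos (rpow_pos_of_pos hq0 x)]
  exact rpow_lt_one hq0.le hq1 hx

lemma qGamma_eq_exp_logQGamma {q x : ℝ} (hq0 : 0 < q) (hq1 : q < 1) (hx : 0 < x) :
    qGamma q x = exp (logQGamma q x) := by
  rw [qGamma, logQGamma, exp_add, exp_sub, rpow_def_of_pos (sub_pos.2 hq1), mul_comm (log _),
    qPochInf_eq_exp_logQPochInf hq0.le hq1 (by rwa [abs_of_pos hq0]),
    qPochInf_eq_exp_logQPochInf hq0.le hq1 (abs_rpow_lt_one hq0 hq1 hx)]

lemma hasDerivAt_logQGamma {q x : ℝ} (hq0 : 0 < q) (hq1 : q < 1) (hx : 0 < x) :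
    HasDerivAt (logQGamma q) (qDigamma q x) x := by
  have hpow := ((hasDerivAt_logQPochInf hq0.le hq1 (abs_rpow_lt_one hq0 hq1 hx)).comp x
    (hasStrictDerivAt_const_rpow hq0 x).hasDerivAt)
  have hlin := ((hasDerivAt_id x).const_sub 1).mul_const (log (1 - q))
  exact ((hpow.const_sub (logQPochInf q q)).add hlin).congr_deriv (by rw [qDigamma]; ring)

lemma tendsto_qDigamma_atTop {q : ℝ} (hq0 : 0 < q) (hq1 : q < 1) (c : ℝ) :
    Tendsto (fun x => qDigamma q (x + c)) atTop (𝓝 (-log (1 - q))) := by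
  simpa [qDigamma] using ((tendsto_derivLogQPochInf_rpow_atTop hq0 hq1 c).mul
    ((tendsto_rpow_add_const_atTop (by linarith) hq1 c).mul_const (log q))).const_sub
    (-log (1 - q))

lemma tendsto_qDigamma_add_log_div_rpow_atTop {q : ℝ} (hq0 : 0 < q) (hq1 : q < 1) (c : ℝ) :
    Tendsto (fun x => (qDigamma q (x + c) + log (1 - q)) / q ^ x) atTop
      (𝓝 (q ^ c * (log q / (1 - q)))) := by
  have hrw : ∀ x, (qDigamma q (x + c) + log (1 - q)) / q ^ x =
      -derivLogQPochInf q (q ^ (x + c)) * (q ^ c * log q) := fun x => by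
    rw [qDigamma, rpow_add hq0]
    field_simp
    ring
  simp_rw [hrw]
  convert ((tendsto_derivLogQPochInf_rpow_atTop hq0 hq1 c).neg.mul_const (q ^ c * log q)) using 2
  ring

lemma exists_strictMonoOn_Ioi_of_eventually_deriv_pos {φ H H' : ℝ → ℝ}
    (hφ : ∀ x > 0, φ x = exp (H x)) (hH : ∀ x > 0, HasDerivAt H (H' x) x)
    (hH' : ∀ᶠ x in atTop, 0 < H' x) : ∃ M, 0 ≤ M ∧ StrictMonoOn φ (Ioi M) := by
  obtain ⟨M, hM⟩ := eventually_atTop.1 hH'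
  have hpos : ∀ x ∈ Ioi (max M 0), 0 < x := fun x hx => (le_max_right M 0).trans_lt hx
  have hmono : StrictMonoOn H (Ioi (max M 0)) := by
    refine strictMonoOn_of_hasDerivWithinAt_pos (f' := H') (convex_Ioi _)
      (fun x hx => (hH x (hpos x hx)).continuousAt.continuousWithinAt) (fun x hx => ?_)
      fun x hx => ?_ <;> rw [interior_Ioi] at hx
    · exact (hH x (hpos x hx)).hasDerivWithinAt
    · exact hM x ((le_max_left M 0).trans hx.le)
  refine ⟨max M 0, le_max_right M 0, fun x hx y hy hxy => ?_⟩
  rw [hφ x (hpos x hx), hφ y (hpos y hy)]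
  exact exp_lt_exp.2 (hmono hx hy hxy)

lemma exists_strictAntiOn_Ioi_of_eventually_deriv_neg {φ H H' : ℝ → ℝ}
    (hφ : ∀ x > 0, φ x = exp (H x)) (hH : ∀ x > 0, HasDerivAt H (H' x) x)
    (hH' : ∀ᶠ x in atTop, H' x < 0) : ∃ M, 0 ≤ M ∧ StrictAntiOn φ (Ioi M) := by
  obtain ⟨M, hM0, hmono⟩ := exists_strictMonoOn_Ioi_of_eventually_deriv_pos
    (φ := fun x => exp (-H x)) (fun _ _ => rfl) (fun x hx => (hH x hx).neg)
    (hH'.mono fun _ => neg_pos.2)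
  refine ⟨M, hM0, fun x hx y hy hxy => ?_⟩
  rw [hφ x (hM0.trans_lt hx), hφ y (hM0.trans_lt hy)]
  simpa using hmono hx hy hxy

section ShiftedSums

variable {ι κ : Type*} [Fintype ι] [Fintype κ] {q : ℝ} {a : ι → ℝ} {b : κ → ℝ}

lemma prod_qGamma_div_prod_qGamma_eq_exp {x : ℝ} (hq0 : 0 < q) (hq1 : q < 1) (hx : 0 < x)
    (ha : ∀ i, 0 ≤ a i) (hb : ∀ j, 0 ≤ b j) :
    (∏ i, qGamma q (x + a i)) / ∏ j, qGamma q (x + b j) =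
      exp (∑ i, logQGamma q (x + a i) - ∑ j, logQGamma q (x + b j)) := by
  rw [exp_sub, exp_sum, exp_sum]
  congr 1 <;> refine Finset.prod_congr rfl fun i _ => qGamma_eq_exp_logQGamma hq0 hq1 ?_
  · linarith [ha i]
  · linarith [hb i]

lemma hasDerivAt_sum_logQGamma_sub_sum {x : ℝ} (hq0 : 0 < q) (hq1 : q < 1) (hx : 0 < x)
    (ha : ∀ i, 0 ≤ a i) (hb : ∀ j, 0 ≤ b j) :
    HasDerivAt (fun y => ∑ i, logQGamma q (y + a i) - ∑ j, logQGamma q (y + b j))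
      (∑ i, qDigamma q (x + a i) - ∑ j, qDigamma q (x + b j)) x := by
  have hshift : ∀ c, 0 ≤ c →
      HasDerivAt (fun y => logQGamma q (y + c)) (qDigamma q (x + c)) x := fun c hc =>
    (hasDerivAt_logQGamma hq0 hq1 (by linarith)).comp_add_const x c
  exact (HasDerivAt.fun_sum fun i _ => hshift _ (ha i)).sub
    (HasDerivAt.fun_sum fun j _ => hshift _ (hb j))

variable (a b)

lemma tendsto_sum_qDigamma_sub_sum (hq0 : 0 < q) (hq1 : q < 1) :
    Tendsto (fun x => ∑ i, qDigamma q (x + a i) - ∑ j, qDigamma q (x + b j)) atTop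
      (𝓝 ((Fintype.card κ - Fintype.card ι) * log (1 - q))) := by
  convert (tendsto_finsetSum Finset.univ fun i _ => tendsto_qDigamma_atTop hq0 hq1 (a i)).sub
    (tendsto_finsetSum Finset.univ fun j _ => tendsto_qDigamma_atTop hq0 hq1 (b j)) using 2
  simp only [Finset.sum_const, Finset.card_univ, nsmul_eq_mul]
  ring

lemma tendsto_sum_qDigamma_sub_sum_add_div_rpow (hq0 : 0 < q) (hq1 : q < 1) :
    Tendsto (fun x => (log (1 - q) * (Fintype.card ι - Fintype.card κ) +
        (∑ i, qDigamma q (x + a i) - ∑ j, qDigamma q (x + b j))) / q ^ x) atTop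
      (𝓝 ((∑ i, q ^ a i - ∑ j, q ^ b j) * (log q / (1 - q)))) := by
  have hrw : ∀ x, (log (1 - q) * (Fintype.card ι - Fintype.card κ) +
      (∑ i, qDigamma q (x + a i) - ∑ j, qDigamma q (x + b j))) / q ^ x =
      ∑ i, (qDigamma q (x + a i) + log (1 - q)) / q ^ x -
        ∑ j, (qDigamma q (x + b j) + log (1 - q)) / q ^ x := fun x => by
    simp only [← Finset.sum_div, Finset.sum_add_distrib, Finset.sum_const, Finset.card_univ,
      nsmul_eq_mul]
    ring
  simp_rw [hrw, sub_mul, Finset.sum_mul]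
  exact (tendsto_finsetSum Finset.univ fun i _ =>
    tendsto_qDigamma_add_log_div_rpow_atTop hq0 hq1 (a i)).sub
    (tendsto_finsetSum Finset.univ fun j _ =>
      tendsto_qDigamma_add_log_div_rpow_atTop hq0 hq1 (b j))

end ShiftedSums

theorem stmt0 (q : ℝ) (hq0 : 0 < q) (hq1 : q < 1) (r s : ℕ)
    (a : Fin r → ℝ) (b : Fin s → ℝ) (ha : ∀ i, 0 ≤ a i) (hb : ∀ j, 0 ≤ b j)
    (f g : ℝ → ℝ)
    (hf : f = fun x => (∏ i, qGamma q (x + a i)) / ∏ j, qGamma q (x + b j))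
    (hg : g = fun x => (1 - q) ^ (((r : ℝ) - (s : ℝ)) * x) * f x) :
    (r > s → ∃ M : ℝ, 0 ≤ M ∧ StrictMonoOn f (Ioi M)) ∧
    (r < s → ∃ M : ℝ, 0 ≤ M ∧ StrictAntiOn f (Ioi M)) ∧
    ((∑ i, q ^ a i) - (∑ j, q ^ b j) < 0 → ∃ M : ℝ, 0 ≤ M ∧ StrictMonoOn g (Ioi M)) ∧
    (0 < (∑ i, q ^ a i) - (∑ j, q ^ b j) → ∃ M : ℝ, 0 ≤ M ∧ StrictAntiOn g (Ioi M)) := by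
  set F := fun y => ∑ i, logQGamma q (y + a i) - ∑ j, logQGamma q (y + b j)
  set F' := fun y => ∑ i, qDigamma q (y + a i) - ∑ j, qDigamma q (y + b j)
  have hF : ∀ x > 0, HasDerivAt F (F' x) x := fun x hx =>
    hasDerivAt_sum_logQGamma_sub_sum hq0 hq1 hx ha hb
  have hG : ∀ x > 0, HasDerivAt (fun y => log (1 - q) * ((r - s) * y) + F y)
      (log (1 - q) * (r - s) + F' x) x := fun x hx =>
    ((((hasDerivAt_id x).const_mul _).const_mul _).add (hF x hx)).congr_deriv (by simp)
  have hfF : ∀ x > 0, f x = exp (F x) := fun x hx => by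
    rw [hf]; exact prod_qGamma_div_prod_qGamma_eq_exp hq0 hq1 hx ha hb
  have hgG : ∀ x > 0, g x = exp (log (1 - q) * ((r - s) * x) + F x) := fun x hx => by
    rw [hg, exp_add, ← hfF x hx, ← rpow_def_of_pos (sub_pos.2 hq1)]
  have hF'lim := tendsto_sum_qDigamma_sub_sum a b hq0 hq1
  have hG'lim := tendsto_sum_qDigamma_sub_sum_add_div_rpow a b hq0 hq1
  simp only [Fintype.card_fin] at hF'lim hG'lim
  have hlog1q : log (1 - q) < 0 := log_neg (sub_pos.2 hq1) (by linarith)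
  have hlogq : log q / (1 - q) < 0 := div_neg_of_neg_of_pos (log_neg hq0 hq1) (sub_pos.2 hq1)
  refine ⟨fun hrs => ?_, fun hrs => ?_, fun hΥ => ?_, fun hΥ => ?_⟩
  · refine exists_strictMonoOn_Ioi_of_eventually_deriv_pos hfF hF (hF'lim.eventually_const_lt ?_)
    exact mul_pos_of_neg_of_neg (by simpa using hrs) hlog1q
  · refine exists_strictAntiOn_Ioi_of_eventually_deriv_neg hfF hF (hF'lim.eventually_lt_const ?_)
    exact mul_neg_of_pos_of_neg (by simpa using hrs) hlog1q
  · refine exists_strictMonoOn_Ioi_of_eventually_deriv_pos hgG hG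
      ((hG'lim.eventually_const_lt (mul_pos_of_neg_of_neg hΥ hlogq)).mono fun x hx => ?_)
    exact (div_pos_iff_of_pos_right (rpow_pos_of_pos hq0 x)).1 hx
  · refine exists_strictAntiOn_Ioi_of_eventually_deriv_neg hgG hG
      ((hG'lim.eventually_lt_const (mul_neg_of_pos_of_neg hΥ hlogq)).mono fun x hx => ?_)
    exact neg_of_div_neg_left hx (rpow_pos_of_pos hq0 x).le
end

section
/- Let 0<q<1, a_1,…,a_r, b_1,…,b_s ≥ 0, and assume Υ ≠ 0. Then for each n≥2 there exists M_n ≥ 0 such that for all x>M_n, F_n(x;q) has the same sign as Υ·(log q)^n. -/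
open Real Set

/-! Expanding every term of `log (q^y; q)_∞ = ∑_k log (1 - q^(y+k))` in powers of `q^(y+k)`
and summing the geometric series in `k` first gives, for `y > 0`,
`log Γ_q(y) = log (q;q)_∞ + (1 - y) log (1 - q) + ∑_{m ≥ 1} q^(m y) / (m (1 - q^m))`.
So on `x > 0`, `log f` is an affine function plus `∑_{m ≥ 1} c_m q^(m x)` with
`c_m = (∑ q^(m a_i) - ∑ q^(m b_j)) / (m (1 - q^m))`; for `n ≥ 2` the affine part dies, so
`F_n(x) = ∑_{m ≥ 1} (m log q)^n c_m q^(m x)`. By dominated convergence `q^(-x) F_n(x)` tends to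
the first coefficient `(log q)^n Υ / (1 - q)`, which is nonzero. -/

open Filter Topology

lemma summable_add_one_pow_mul_geometric {t : ℝ} (ht0 : 0 < t) (ht1 : t < 1) (k : ℕ) :
    Summable (fun m : ℕ => ((m : ℝ) + 1) ^ k * t ^ m) := by
  have hshift := (summable_nat_add_iff (f := fun m : ℕ => (m : ℝ) ^ k * t ^ m) 1).2 <|
    summable_pow_mul_geometric_of_norm_lt_one k (by rwa [norm_of_nonneg ht0.le])
  refine (hshift.mul_left t⁻¹).congr fun m => ?_
  push_cast
  rw [pow_succ]
  field_simp

lemma one_sub_le_mul_one_sub_pow {q : ℝ} (hq0 : 0 ≤ q) (hq1 : q ≤ 1) (m : ℕ) :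
    1 - q ≤ (m + 1) * (1 - q ^ (m + 1)) := by
  have hpow : q ^ (m + 1) ≤ q := pow_le_of_le_one hq0 hq1 m.succ_ne_zero
  nlinarith [pow_le_one₀ hq0 hq1 (n := m + 1), (Nat.cast_nonneg m : (0 : ℝ) ≤ m)]

section qPochhammer

variable {q u : ℝ}

lemma mul_pow_mem_Ico (hq0 : 0 < q) (hq1 : q < 1) (hu0 : 0 ≤ u) (hu1 : u < 1) (k : ℕ) :
    u * q ^ k ∈ Ico 0 1 :=
  ⟨by positivity, by nlinarith [pow_le_one₀ hq0.le hq1.le (n := k), pow_pos hq0 k]⟩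

lemma hasSum_neg_log_one_sub_mul_pow (hq0 : 0 < q) (hq1 : q < 1) (hu0 : 0 ≤ u) (hu1 : u < 1)
    (k : ℕ) :
    HasSum (fun m : ℕ => (u * q ^ k) ^ (m + 1) / (m + 1)) (-log (1 - u * q ^ k)) := by
  obtain ⟨h0, h1⟩ := mul_pow_mem_Ico hq0 hq1 hu0 hu1 k
  exact hasSum_pow_div_log_of_abs_lt_one (by rwa [abs_of_nonneg h0])

lemma hasSum_mul_pow_pow_div (hq0 : 0 < q) (hq1 : q < 1) (u : ℝ) (m : ℕ) :
    HasSum (fun k : ℕ => (u * q ^ k) ^ (m + 1) / (m + 1))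
      (u ^ (m + 1) / ((m + 1) * (1 - q ^ (m + 1)))) := by
  have hgeom := (hasSum_geometric_of_lt_one (pow_nonneg hq0.le (m + 1))
    (pow_lt_one₀ hq0.le hq1 m.succ_ne_zero)).mul_left (u ^ (m + 1) / (m + 1))
  have hterm : (fun k : ℕ => (u * q ^ k) ^ (m + 1) / (m + 1)) =
      fun k => u ^ (m + 1) / (m + 1) * (q ^ (m + 1)) ^ k := funext fun k => by
    rw [mul_pow, ← pow_mul, ← pow_mul, mul_comm k]
    ring
  rwa [hterm, div_mul_eq_div_div, div_eq_mul_inv (u ^ (m + 1) / (m + 1))]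

lemma summable_uncurry_mul_pow_pow_div (hq0 : 0 < q) (hq1 : q < 1) (hu0 : 0 ≤ u)
    (hu1 : u < 1) :
    Summable (Function.uncurry fun (m k : ℕ) => (u * q ^ k) ^ (m + 1) / (m + 1)) := by
  have hnonneg : ∀ m k : ℕ, 0 ≤ (u * q ^ k) ^ (m + 1) / (m + 1) := fun m k =>
    div_nonneg (pow_nonneg (mul_pow_mem_Ico hq0 hq1 hu0 hu1 k).1 _) (by positivity)
  refine (summable_prod_of_nonneg fun p => hnonneg p.1 p.2).2
    ⟨fun m => (hasSum_mul_pow_pow_div hq0 hq1 u m).summable, ?_⟩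
  refine .of_nonneg_of_le (fun m => tsum_nonneg fun k => hnonneg m k) (fun m => ?_)
    ((summable_geometric_of_lt_one hu0 hu1).mul_left (u / (1 - q)))
  calc ∑' k, Function.uncurry (fun (m k : ℕ) => (u * q ^ k) ^ (m + 1) / (m + 1)) (m, k)
      = u ^ (m + 1) / ((m + 1) * (1 - q ^ (m + 1))) :=
        (hasSum_mul_pow_pow_div hq0 hq1 u m).tsum_eq
    _ ≤ u ^ (m + 1) / (1 - q) := div_le_div_of_nonneg_left (pow_nonneg hu0 _) (sub_pos.2 hq1)
        (one_sub_le_mul_one_sub_pow hq0.le hq1.le m)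
    _ = u / (1 - q) * u ^ m := by ring

lemma qPochInf_eq_exp_tsum_log (hq0 : 0 < q) (hq1 : q < 1) (hu0 : 0 ≤ u) (hu1 : u < 1) :
    qPochInf u q = exp (∑' k : ℕ, log (1 - u * q ^ k)) := by
  have hsum : Summable fun k : ℕ => log (1 - u * q ^ k) := by
    refine (summable_uncurry_mul_pow_pow_div hq0 hq1 hu0 hu1).prod_symm.prod.neg.congr fun k => ?_
    rw [← neg_neg (log _), ← (hasSum_neg_log_one_sub_mul_pow hq0 hq1 hu0 hu1 k).tsum_eq]
    rfl
  rw [qPochInf, rexp_tsum_eq_tprod (fun k => sub_pos.2 (mul_pow_mem_Ico hq0 hq1 hu0 hu1 k).2) hsum]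

lemma qPochInf_pos (hq0 : 0 < q) (hq1 : q < 1) (hu0 : 0 ≤ u) (hu1 : u < 1) :
    0 < qPochInf u q := by
  rw [qPochInf_eq_exp_tsum_log hq0 hq1 hu0 hu1]
  exact exp_pos _

lemma log_qPochInf (hq0 : 0 < q) (hq1 : q < 1) (hu0 : 0 ≤ u) (hu1 : u < 1) :
    log (qPochInf u q) = -∑' m : ℕ, u ^ (m + 1) / ((m + 1) * (1 - q ^ (m + 1))) := by
  have hswap := (summable_uncurry_mul_pow_pow_div hq0 hq1 hu0 hu1).tsum_comm
  simp only [(hasSum_neg_log_one_sub_mul_pow hq0 hq1 hu0 hu1 _).tsum_eq,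
    (hasSum_mul_pow_pow_div hq0 hq1 u _).tsum_eq] at hswap
  rw [qPochInf_eq_exp_tsum_log hq0 hq1 hu0 hu1, log_exp, ← hswap, tsum_neg, neg_neg]

end qPochhammer

lemma abs_mul_exp_nat_mul_le {L x y c C : ℝ} (hL : L ≤ 0) (hyx : y ≤ x) (hc : |c| ≤ C)
    (j : ℕ) :
    |c * exp (j * L * x)| ≤ C * exp (L * y) ^ j := by
  rw [abs_mul, abs_of_pos (exp_pos _), ← exp_nat_mul]
  have hjL : (j : ℝ) * L ≤ 0 := mul_nonpos_of_nonneg_of_nonpos j.cast_nonneg hL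
  exact mul_le_mul hc (exp_le_exp.2 (by nlinarith)) (exp_pos _).le ((abs_nonneg c).trans hc)

noncomputable def expSeries (L : ℝ) (c : ℕ → ℝ) (x : ℝ) : ℝ :=
  ∑' m : ℕ, c m * exp ((m + 1) * L * x)

section expSeries

variable {L C : ℝ} {k : ℕ} {c : ℕ → ℝ}

lemma abs_coeff_mul_exp_le (hL : L < 0) (hc : ∀ m, |c m| ≤ C * (m + 1) ^ k) {x y : ℝ}
    (hyx : y ≤ x) (m : ℕ) :
    |c m * exp ((m + 1) * L * x)| ≤
      C * exp (L * y) * (((m : ℝ) + 1) ^ k * exp (L * y) ^ m) := by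
  have h := abs_mul_exp_nat_mul_le hL.le hyx (hc m) (m + 1)
  push_cast at h
  rw [pow_succ] at h
  linarith

lemma summable_exp_majorant (hL : L < 0) (C : ℝ) (k : ℕ) {y : ℝ} (hy : 0 < y) :
    Summable (fun m : ℕ => C * exp (L * y) * (((m : ℝ) + 1) ^ k * exp (L * y) ^ m)) :=
  (summable_add_one_pow_mul_geometric (exp_pos _) (exp_lt_one_iff.2 (mul_neg_of_neg_of_pos hL hy))
    k).mul_left _

lemma summable_expSeries (hL : L < 0) (hc : ∀ m, |c m| ≤ C * (m + 1) ^ k) {x : ℝ}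
    (hx : 0 < x) : Summable (fun m : ℕ => c m * exp ((m + 1) * L * x)) :=
  .of_norm_bounded (summable_exp_majorant hL C k hx) (abs_coeff_mul_exp_le hL hc le_rfl)

lemma abs_pow_mul_coeff_le (hc : ∀ m, |c m| ≤ C * (m + 1) ^ k) (n m : ℕ) :
    |((m + 1) * L) ^ n * c m| ≤ C * |L| ^ n * (m + 1) ^ (k + n) := by
  rw [abs_mul, abs_pow, abs_mul, abs_of_pos (by positivity : (0 : ℝ) < m + 1)]
  calc ((m + 1) * |L|) ^ n * |c m| ≤ ((m + 1) * |L|) ^ n * (C * (m + 1) ^ k) := by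
        gcongr; exact hc m
    _ = C * |L| ^ n * (m + 1) ^ (k + n) := by rw [mul_pow, pow_add]; ring

lemma abs_mul_coeff_le (hc : ∀ m, |c m| ≤ C * (m + 1) ^ k) (m : ℕ) :
    |(m + 1) * L * c m| ≤ C * |L| * (m + 1) ^ (k + 1) := by
  simpa using abs_pow_mul_coeff_le hc 1 m

lemma hasDerivAt_expSeries (hL : L < 0) (hc : ∀ m, |c m| ≤ C * (m + 1) ^ k) {x : ℝ}
    (hx : 0 < x) :
    HasDerivAt (expSeries L c) (expSeries L (fun m : ℕ => (m + 1) * L * c m) x) x := by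
  have hterm : ∀ m y, HasDerivAt (fun z => c m * exp ((m + 1) * L * z))
      ((m + 1) * L * c m * exp ((m + 1) * L * y)) y := fun m y =>
    ((((hasDerivAt_id' y).const_mul ((m + 1) * L)).exp).const_mul (c m)).congr_deriv (by ring)
  exact hasDerivAt_tsum_of_isPreconnected
    (summable_exp_majorant hL _ _ (half_pos hx)) isOpen_Ioi isPreconnected_Ioi
    (fun m y _ => hterm m y)
    (fun m y hy => abs_coeff_mul_exp_le hL (abs_mul_coeff_le hc) hy.le m)
    (half_lt_self hx) (summable_expSeries hL hc hx) (half_lt_self hx)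

lemma iteratedDeriv_expSeries (hL : L < 0) (hc : ∀ m, |c m| ≤ C * (m + 1) ^ k) (n : ℕ)
    {x : ℝ} (hx : 0 < x) :
    iteratedDeriv n (expSeries L c) x =
      expSeries L (fun m : ℕ => ((m + 1) * L) ^ n * c m) x := by
  induction n generalizing C k c x with
  | zero => simp only [iteratedDeriv_zero, pow_zero, one_mul]
  | succ n ih =>
    have hderiv :
        deriv (expSeries L c) =ᶠ[𝓝 x] expSeries L (fun m : ℕ => (m + 1) * L * c m) :=
      eventually_of_mem (Ioi_mem_nhds hx) fun y hy => (hasDerivAt_expSeries hL hc hy).deriv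
    rw [iteratedDeriv_succ', hderiv.iteratedDeriv_eq, ih (abs_mul_coeff_le hc) hx]
    exact tsum_congr fun m => by ring

lemma iteratedDeriv_eq_expSeries_of_eq_affine_add (hL : L < 0)
    (hc : ∀ m, |c m| ≤ C * (m + 1) ^ k)
    {g : ℝ → ℝ} {A B : ℝ} (hg : ∀ x > 0, g x = A + B * x + expSeries L c x) {n : ℕ}
    (hn : 2 ≤ n) {x : ℝ} (hx : 0 < x) :
    iteratedDeriv n g x = expSeries L (fun m : ℕ => ((m + 1) * L) ^ n * c m) x := by
  obtain ⟨n, rfl⟩ : ∃ n', n = n' + 1 := ⟨n - 1, by omega⟩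
  have hderiv :
      deriv g =ᶠ[𝓝 x] fun y => B + expSeries L (fun m : ℕ => (m + 1) * L * c m) y := by
    filter_upwards [Ioi_mem_nhds hx] with y hy
    have hgy : g =ᶠ[𝓝 y] fun z => A + B * z + expSeries L c z :=
      eventually_of_mem (Ioi_mem_nhds hy) hg
    rw [hgy.deriv_eq]
    exact ((((hasDerivAt_id' y).const_mul B).const_add A).add
      (hasDerivAt_expSeries hL hc hy)).deriv.trans (by rw [mul_one])
  rw [iteratedDeriv_succ', hderiv.iteratedDeriv_eq, iteratedDeriv_const_add (by omega),
    iteratedDeriv_expSeries hL (abs_mul_coeff_le hc) n hx]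
  exact tsum_congr fun m => by ring

lemma tendsto_exp_mul_expSeries (hL : L < 0) (hc : ∀ m, |c m| ≤ C * (m + 1) ^ k) :
    Tendsto (fun x => exp (-(L * x)) * expSeries L c x) atTop (𝓝 (c 0)) := by
  have hshift : ∀ x, exp (-(L * x)) * expSeries L c x = ∑' m : ℕ, c m * exp (m * L * x) := by
    intro x
    rw [expSeries, ← tsum_mul_left]
    refine tsum_congr fun m => ?_
    rw [mul_left_comm, ← exp_add]
    ring_nf
  have hlim : ∀ m : ℕ, Tendsto (fun x => c m * exp (m * L * x)) atTop
      (𝓝 (if m = 0 then c 0 else 0)) := by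
    rintro (_ | m)
    · simp
    · have hneg : ((m + 1 : ℕ) : ℝ) * L < 0 := mul_neg_of_pos_of_neg (by positivity) hL
      simpa using (tendsto_exp_atBot.comp (tendsto_id.const_mul_atTop_of_neg hneg)).const_mul
        (c (m + 1))
  have hdom := tendsto_tsum_of_dominated_convergence
    (summable_add_one_pow_mul_geometric (exp_pos L) (exp_lt_one_iff.2 hL) k |>.mul_left C) hlim
    (eventually_of_mem (Ici_mem_atTop 1) fun x hx m => by
      simpa [mul_one, mul_assoc] using abs_mul_exp_nat_mul_le hL.le hx (hc m) m)
  rw [tsum_ite_eq] at hdom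
  exact hdom.congr fun x => (hshift x).symm

lemma eventually_expSeries_mul_pos (hL : L < 0) (hc : ∀ m, |c m| ≤ C * (m + 1) ^ k)
    (hc0 : c 0 ≠ 0) : ∀ᶠ x in atTop, 0 < expSeries L c x * c 0 := by
  have hlim := (tendsto_exp_mul_expSeries hL hc).mul_const (c 0)
  filter_upwards [hlim.eventually_const_lt (mul_self_pos.2 hc0)] with x hx
  rw [mul_assoc] at hx
  exact pos_of_mul_pos_right hx (exp_pos _).le

lemma expSeries_sub {x : ℝ} {d : ℕ → ℝ}
    (hc : Summable fun m : ℕ => c m * exp ((m + 1) * L * x))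
    (hd : Summable fun m : ℕ => d m * exp ((m + 1) * L * x)) :
    expSeries L (c - d) x = expSeries L c x - expSeries L d x := by
  simp only [expSeries, Pi.sub_apply, sub_mul]
  exact hc.tsum_sub hd

lemma expSeries_sum {ι : Type*} {x : ℝ} (s : Finset ι) {f : ι → ℕ → ℝ}
    (hf : ∀ i ∈ s, Summable fun m : ℕ => f i m * exp ((m + 1) * L * x)) :
    expSeries L (∑ i ∈ s, f i) x = ∑ i ∈ s, expSeries L (f i) x := by
  simp only [expSeries, Finset.sum_apply, Finset.sum_mul]
  exact Summable.tsum_finsetSum hf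

end expSeries

-- The coefficient of `q^((m+1) x)` in the expansion of `log Γ_q(x + c)` (see `log_qGamma_add`).
noncomputable def qGammaCoeff (q c : ℝ) (m : ℕ) : ℝ :=
  (q ^ c) ^ (m + 1) / ((m + 1) * (1 - q ^ (m + 1)))

section qGamma

variable {q : ℝ}

lemma abs_qGammaCoeff_le (hq0 : 0 < q) (hq1 : q < 1) {c : ℝ} (hc : 0 ≤ c) (m : ℕ) :
    |qGammaCoeff q c m| ≤ (1 - q)⁻¹ := by
  have hqc : q ^ c ≤ 1 := rpow_le_one hq0.le hq1.le hc
  rw [qGammaCoeff, abs_of_nonneg (div_nonneg (by positivity)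
    ((sub_pos.2 hq1).le.trans (one_sub_le_mul_one_sub_pow hq0.le hq1.le m))), ← one_div]
  exact div_le_div₀ zero_le_one (pow_le_one₀ (by positivity) hqc) (sub_pos.2 hq1)
    (one_sub_le_mul_one_sub_pow hq0.le hq1.le m)

lemma qGamma_pos (hq0 : 0 < q) (hq1 : q < 1) {y : ℝ} (hy : 0 < y) : 0 < qGamma q y := by
  have hqq := qPochInf_pos hq0 hq1 hq0.le hq1
  have hqy := qPochInf_pos hq0 hq1 (rpow_nonneg hq0.le y) (rpow_lt_one hq0.le hq1 hy)
  have hpow : 0 < (1 - q) ^ (1 - y) := rpow_pos_of_pos (sub_pos.2 hq1) _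
  rw [qGamma]
  positivity

lemma log_qGamma_add (hq0 : 0 < q) (hq1 : q < 1) {c x : ℝ} (hc : 0 ≤ c) (hx : 0 < x) :
    log (qGamma q (x + c)) = (log (qPochInf q q) + (1 - c) * log (1 - q)) +
      -log (1 - q) * x + expSeries (log q) (qGammaCoeff q c) x := by
  have hxc : 0 < x + c := by linarith
  have hu0 : 0 ≤ q ^ (x + c) := rpow_nonneg hq0.le _
  have hu1 : q ^ (x + c) < 1 := rpow_lt_one hq0.le hq1 hxc
  have hpow : ∀ m : ℕ,
      (q ^ (x + c)) ^ (m + 1) = (q ^ c) ^ (m + 1) * exp ((m + 1) * log q * x) := fun m => by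
    rw [rpow_add hq0, mul_pow, mul_comm, rpow_def_of_pos hq0 x, ← exp_nat_mul]
    push_cast
    ring_nf
  rw [qGamma, log_mul (div_pos (qPochInf_pos hq0 hq1 hq0.le hq1)
      (qPochInf_pos hq0 hq1 hu0 hu1)).ne' (rpow_pos_of_pos (sub_pos.2 hq1) _).ne',
    log_div (qPochInf_pos hq0 hq1 hq0.le hq1).ne' (qPochInf_pos hq0 hq1 hu0 hu1).ne',
    log_rpow (sub_pos.2 hq1), log_qPochInf hq0 hq1 hu0 hu1, expSeries]
  simp only [hpow, qGammaCoeff, mul_div_right_comm]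
  ring

lemma abs_sum_sub_sum_qGammaCoeff_le (hq0 : 0 < q) (hq1 : q < 1) {r s : ℕ} (a : Fin r → ℝ)
    (b : Fin s → ℝ) (ha : ∀ i, 0 ≤ a i) (hb : ∀ j, 0 ≤ b j) (m : ℕ) :
    |(∑ i, qGammaCoeff q (a i) - ∑ j, qGammaCoeff q (b j)) m| ≤ (r + s) * (1 - q)⁻¹ := by
  rw [Pi.sub_apply, Finset.sum_apply, Finset.sum_apply]
  calc _ ≤ ∑ i, |qGammaCoeff q (a i) m| + ∑ j, |qGammaCoeff q (b j) m| :=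
        (abs_sub _ _).trans (add_le_add (Finset.abs_sum_le_sum_abs _ _)
          (Finset.abs_sum_le_sum_abs _ _))
    _ ≤ ∑ _i : Fin r, (1 - q)⁻¹ + ∑ _j : Fin s, (1 - q)⁻¹ := by
        gcongr with i _ j _
        · exact abs_qGammaCoeff_le hq0 hq1 (ha i) m
        · exact abs_qGammaCoeff_le hq0 hq1 (hb j) m
    _ = (r + s) * (1 - q)⁻¹ := by simp only [Finset.sum_const, Finset.card_univ,
        Fintype.card_fin, nsmul_eq_mul]; ring

lemma log_qGamma_ratio_eq (hq0 : 0 < q) (hq1 : q < 1) {r s : ℕ} (a : Fin r → ℝ)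
    (b : Fin s → ℝ) (ha : ∀ i, 0 ≤ a i) (hb : ∀ j, 0 ≤ b j) :
    ∃ A B : ℝ, ∀ x > 0, log ((∏ i, qGamma q (x + a i)) / ∏ j, qGamma q (x + b j)) =
      A + B * x +
        expSeries (log q) (∑ i, qGammaCoeff q (a i) - ∑ j, qGammaCoeff q (b j)) x := by
  refine ⟨∑ i, (log (qPochInf q q) + (1 - a i) * log (1 - q)) -
    ∑ j, (log (qPochInf q q) + (1 - b j) * log (1 - q)), -log (1 - q) * (r - s), fun x hx => ?_⟩
  have hpos : ∀ c, 0 ≤ c → 0 < qGamma q (x + c) := fun c hc =>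
    qGamma_pos hq0 hq1 (by linarith)
  have hsum : ∀ c, 0 ≤ c →
      Summable fun m : ℕ => qGammaCoeff q c m * exp ((m + 1) * log q * x) := fun c hc =>
    summable_expSeries (log_neg hq0 hq1) (k := 0)
      (by simpa using abs_qGammaCoeff_le hq0 hq1 hc) hx
  have hsumFin : ∀ {t : ℕ} (e : Fin t → ℝ), (∀ i, 0 ≤ e i) →
      Summable fun m : ℕ => (∑ i, qGammaCoeff q (e i)) m * exp ((m + 1) * log q * x) := by
    intro t e he
    simpa only [Finset.sum_apply, Finset.sum_mul] using summable_sum fun i _ => hsum _ (he i)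
  rw [log_div (Finset.prod_pos fun i _ => hpos _ (ha i)).ne'
      (Finset.prod_pos fun j _ => hpos _ (hb j)).ne',
    log_prod fun i _ => (hpos _ (ha i)).ne', log_prod fun j _ => (hpos _ (hb j)).ne',
    Finset.sum_congr rfl fun i _ => log_qGamma_add hq0 hq1 (ha i) hx,
    Finset.sum_congr rfl fun j _ => log_qGamma_add hq0 hq1 (hb j) hx,
    expSeries_sub (hsumFin a ha) (hsumFin b hb), expSeries_sum _ fun i _ => hsum _ (ha i),
    expSeries_sum _ fun j _ => hsum _ (hb j)]
  simp only [Finset.sum_add_distrib, Finset.sum_const, Finset.card_univ, Fintype.card_fin,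
    nsmul_eq_mul]
  ring

end qGamma

theorem stmt2 (q : ℝ) (hq0 : 0 < q) (hq1 : q < 1) (r s : ℕ)
    (a : Fin r → ℝ) (b : Fin s → ℝ) (ha : ∀ i, 0 ≤ a i) (hb : ∀ j, 0 ≤ b j)
    (Υ : ℝ) (hΥdef : Υ = (∑ i, q ^ a i) - (∑ j, q ^ b j)) (hΥ : Υ ≠ 0)
    (F : ℕ → ℝ → ℝ)
    (hF : F = fun n x => iteratedDeriv n
      (fun y => Real.log ((∏ i, qGamma q (y + a i)) / ∏ j, qGamma q (y + b j))) x) :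
    ∀ n : ℕ, 2 ≤ n → ∃ M : ℝ, 0 ≤ M ∧ ∀ x > M,
      0 < F n x * (Υ * Real.log q ^ n) := by
  intro n hn
  have hL : log q < 0 := log_neg hq0 hq1
  set c := ∑ i, qGammaCoeff q (a i) - ∑ j, qGammaCoeff q (b j)
  have hc : ∀ m : ℕ, |c m| ≤ ((r + s) * (1 - q)⁻¹) * (m + 1) ^ 0 := by
    simpa only [pow_zero, mul_one] using abs_sum_sub_sum_qGammaCoeff_le hq0 hq1 a b ha hb
  have hc0 : ((((0 : ℕ) : ℝ) + 1) * log q) ^ n * c 0 = Υ * log q ^ n * (1 - q)⁻¹ := by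
    simp only [c, Pi.sub_apply, Finset.sum_apply, qGammaCoeff, hΥdef, Nat.cast_zero, zero_add,
      one_mul, pow_one, ← Finset.sum_div, ← sub_div]
    ring
  obtain ⟨A, B, hlog⟩ := log_qGamma_ratio_eq hq0 hq1 a b ha hb
  have hc0_ne : Υ * log q ^ n * (1 - q)⁻¹ ≠ 0 :=
    mul_ne_zero (mul_ne_zero hΥ (pow_ne_zero _ hL.ne)) (inv_ne_zero (sub_pos.2 hq1).ne')
  obtain ⟨M, hM⟩ := eventually_atTop.1
    (eventually_expSeries_mul_pos hL (abs_pow_mul_coeff_le hc n) (hc0 ▸ hc0_ne))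
  refine ⟨max M 0, le_max_right _ _, fun x hx => ?_⟩
  have hpos := hM x (le_max_left _ _ |>.trans hx.le)
  rw [hc0, ← mul_assoc] at hpos
  simp only [hF]
  rw [iteratedDeriv_eq_expSeries_of_eq_affine_add hL hc hlog hn ((le_max_right _ _).trans_lt hx)]
  exact pos_of_mul_pos_left hpos (inv_pos.2 (sub_pos.2 hq1)).le
end

section
/- Let f be a function defined for x>0, let w,q>0 and a≥0, and set h(x) := q^{−(x−w)(x+2a−2)/(2w)} f(x). Then f satisfies f(x+w) = [x+a]_q f(x) for all x>0 if and only if h satisfies h(x+w) = [x+a]_{q^{−1}} h(x) for all x>0; furthermore h(w) = f(w). -/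
open Real Set

/-- The q-number `[x]_q = (1 - q^x)/(1 - q)`. -/
noncomputable def qBracket (q x : ℝ) : ℝ := (1 - q ^ x) / (1 - q)

lemma qBracket_inv (q y : ℝ) (hq : 0 < q) :
    qBracket q⁻¹ y = q ^ (1 - y) * qBracket q y := by
  unfold qBracket
  rcases eq_or_ne q 1 with h | h
  · simp [h]
  · rw [Real.inv_rpow hq.le, Real.rpow_sub hq, Real.rpow_one]
    have h1 : q ^ y ≠ 0 := (Real.rpow_pos_of_pos hq y).ne'
    have h2 : (1 : ℝ) - q ≠ 0 := sub_ne_zero.mpr (Ne.symm h)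
    have h3 : (1 : ℝ) - q⁻¹ ≠ 0 := sub_ne_zero.mpr fun e => h (inv_eq_one.mp e.symm)
    have h4 : q - 1 ≠ 0 := sub_ne_zero.mpr h
    field_simp
    ring

theorem stmt5 (f : ℝ → ℝ) (w q a : ℝ) (hw : 0 < w) (hq : 0 < q) (ha : 0 ≤ a)
    (h : ℝ → ℝ)
    (hh : h = fun x => q ^ (-((x - w) * (x + 2 * a - 2)) / (2 * w)) * f x) :
    ((∀ x > 0, f (x + w) = qBracket q (x + a) * f x) ↔
      ∀ x > 0, h (x + w) = qBracket q⁻¹ (x + a) * h x) ∧ h w = f w := by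
  subst hh
  have hpos : ∀ t : ℝ, (0 : ℝ) < q ^ t := fun t => Real.rpow_pos_of_pos hq t
  have key : ∀ x : ℝ, -((x + w - w) * (x + w + 2 * a - 2)) / (2 * w)
      = -((x - w) * (x + 2 * a - 2)) / (2 * w) + (1 - (x + a)) := by
    intro x
    field_simp
    ring
  constructor
  · constructor
    · intro hf x hx
      simp only
      rw [key x, Real.rpow_add hq, hf x hx, qBracket_inv _ _ hq]
      ring
    · intro hf x hx
      have := hf x hx
      simp only at this
      rw [key x, Real.rpow_add hq, qBracket_inv _ _ hq] at this
      have hne : q ^ (-((x - w) * (x + 2 * a - 2)) / (2 * w)) * q ^ (1 - (x + a)) ≠ 0 :=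
        (mul_pos (hpos _) (hpos _)).ne'
      apply mul_left_cancel₀ hne
      rw [this]
      ring
  · simp
end

section
/- Let 0<q<1, w>0, k ∈ ℝ, a_1,…,a_r, b_1,…,b_s ≥ 0, and let f be a positive function on (0,∞) satisfying f(x+w) = ( [x+a_1]_q ⋯ [x+a_r]_q / ([x+b_1]_q ⋯ [x+b_s]_q) )^k f(x) for all x>0 and f(w)=1. If f is logarithmically convex for all x>M, or logarithmically concave for all x>M, for some M≥0, then f(x) = ( ∏_{j=1}^r Γ_{q^w}((x+a_j)/w)/Γ_{q^w}((w+a_j)/w) · ∏_{i=1}^s Γ_{q^w}((w+b_i)/w)/Γ_{q^w}((x+b_i)/w) · [w]_q^{(r−s)(x/w−1)} )^k for all x>0. -/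
open Real Set

/-- The canonical solution `F` of the functional equation `(main eqn)`:
`F(x) = (∏_j Γ_{q^w}((x+a_j)/w)/Γ_{q^w}((w+a_j)/w) ·
        ∏_i Γ_{q^w}((w+b_i)/w)/Γ_{q^w}((x+b_i)/w) · [w]_q^{(r-s)(x/w-1)})^k`. -/
noncomputable def mainSol (q w k : ℝ) (r s : ℕ) (a : Fin r → ℝ) (b : Fin s → ℝ)
    (x : ℝ) : ℝ :=
  ((∏ j, qGamma (q ^ w) ((x + a j) / w) / qGamma (q ^ w) ((w + a j) / w)) *
   (∏ i, qGamma (q ^ w) ((w + b i) / w) / qGamma (q ^ w) ((x + b i) / w)) *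
   qBracket q w ^ (((r : ℝ) - (s : ℝ)) * (x / w - 1))) ^ k

open Filter Topology

section Increments

variable {φ : ℝ → ℝ} {M w t ℓ : ℝ}

theorem ConvexOn.tendsto_add_sub_of_tendsto_add_period_sub (hφ : ConvexOn ℝ (Ioi M) φ)
    (hw : 0 < w) (ht : 0 < t) (h : Tendsto (fun y => φ (y + w) - φ y) atTop (𝓝 ℓ)) :
    Tendsto (fun y => φ (y + t) - φ y) atTop (𝓝 (t / w * ℓ)) := by
  have hlow : Tendsto (fun y => t / w * (φ (y - w + w) - φ (y - w))) atTop (𝓝 (t / w * ℓ)) :=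
    (h.comp (tendsto_atTop_add_const_right _ (-w) tendsto_id)).const_mul _
  have hupp : Tendsto (fun y => t / w * (φ (y + t + w) - φ (y + t))) atTop (𝓝 (t / w * ℓ)) :=
    (h.comp (tendsto_atTop_add_const_right _ t tendsto_id)).const_mul _
  refine tendsto_of_tendsto_of_tendsto_of_le_of_le' hlow hupp ?_ ?_ <;>
    filter_upwards [eventually_gt_atTop (M + w)] with y hy
  · have := hφ.slope_mono_adjacent (x := y - w) (y := y) (z := y + t)
      (by simp only [mem_Ioi]; linarith) (by simp only [mem_Ioi]; linarith) (by linarith)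
      (by linarith)
    rw [show y - (y - w) = w by ring, show y + t - y = t by ring, div_le_div_iff₀ hw ht] at this
    rw [sub_add_cancel, div_mul_eq_mul_div, div_le_iff₀ hw]
    linarith
  · have := hφ.slope_mono_adjacent (x := y) (y := y + t) (z := y + t + w)
      (by simp only [mem_Ioi]; linarith) (by simp only [mem_Ioi]; linarith) (by linarith)
      (by linarith)
    rw [show y + t - y = t by ring, show y + t + w - (y + t) = w by ring,
      div_le_div_iff₀ ht hw] at this
    rw [div_mul_eq_mul_div, le_div_iff₀ hw]
    linarith

theorem ConcaveOn.tendsto_add_sub_of_tendsto_add_period_sub (hφ : ConcaveOn ℝ (Ioi M) φ)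
    (hw : 0 < w) (ht : 0 < t) (h : Tendsto (fun y => φ (y + w) - φ y) atTop (𝓝 ℓ)) :
    Tendsto (fun y => φ (y + t) - φ y) atTop (𝓝 (t / w * ℓ)) := by
  have := hφ.neg.tendsto_add_sub_of_tendsto_add_period_sub hw ht (ℓ := -ℓ)
    (by simpa [neg_add_eq_sub, sub_eq_add_neg, add_comm] using h.neg)
  simpa [neg_add_eq_sub, sub_eq_add_neg, add_comm] using this.neg

theorem eq_of_add_period_eq_of_tendsto_add_sub (hw : 0 < w)
    (hper : ∀ y > 0, φ (y + w) = φ y)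
    (hlim : ∀ t > 0, Tendsto (fun y => φ (y + t) - φ y) atTop (𝓝 0)) :
    ∀ x > 0, φ x = φ w := by
  intro x hx
  have hmul : ∀ y > 0, ∀ n : ℕ, φ (y + n * w) = φ y := by
    intro y hy n
    induction n with
    | zero => simp
    | succ n ih =>
      rw [Nat.cast_succ, add_one_mul, ← add_assoc, hper _ (by positivity), ih]
  have hgrid : Tendsto (fun n : ℕ => w + n * w) atTop atTop :=
    tendsto_atTop_add_const_left _ w (tendsto_natCast_atTop_atTop.atTop_mul_const hw)
  have hconst : (fun n : ℕ => φ (w + n * w + x) - φ (w + n * w)) = fun _ => φ x - φ w := by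
    ext n
    have := hmul x hx (n + 1)
    rw [Nat.cast_succ, add_one_mul] at this
    rw [hmul w hw, ← this]
    ring_nf
  have := (hlim x hx).comp hgrid
  rw [Function.comp_def, hconst, tendsto_const_nhds_iff] at this
  linarith

end Increments

section qPochhammer

variable {a Q : ℝ}

theorem abs_log_one_sub_mul_pow_le (ha0 : 0 ≤ a) (ha1 : a < 1) (hQ0 : 0 ≤ Q) (hQ1 : Q ≤ 1)
    (n : ℕ) : |log (1 - a * Q ^ n)| ≤ a / (1 - a) * Q ^ n := by
  have hQn0 : 0 ≤ Q ^ n := pow_nonneg hQ0 n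
  have hQn1 : Q ^ n ≤ 1 := pow_le_one₀ hQ0 hQ1
  have haQ : a * Q ^ n ≤ a := mul_le_of_le_one_right ha0 hQn1
  have habs : |a * Q ^ n| = a * Q ^ n := abs_of_nonneg (by positivity)
  calc |log (1 - a * Q ^ n)| ≤ a * Q ^ n / (1 - a * Q ^ n) := by
        have := abs_log_sub_add_sum_range_le (x := a * Q ^ n) (by rw [habs]; linarith) 0
        rwa [Finset.range_zero, Finset.sum_empty, zero_add, zero_add, pow_one, habs] at this
    _ ≤ a * Q ^ n / (1 - a) := by gcongr
    _ = a / (1 - a) * Q ^ n := by ring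

theorem summable_log_one_sub_mul_pow_s7 (ha0 : 0 ≤ a) (ha1 : a < 1) (hQ0 : 0 ≤ Q) (hQ1 : Q < 1) :
    Summable fun n : ℕ => log (1 - a * Q ^ n) :=
  .of_norm_bounded ((summable_geometric_of_lt_one hQ0 hQ1).mul_left _)
    (abs_log_one_sub_mul_pow_le ha0 ha1 hQ0 hQ1.le)

theorem qPochInf_eq_exp_tsum (ha0 : 0 ≤ a) (ha1 : a < 1) (hQ0 : 0 ≤ Q) (hQ1 : Q < 1) :
    qPochInf a Q = exp (∑' n : ℕ, log (1 - a * Q ^ n)) := by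
  unfold qPochInf
  convert (summable_log_one_sub_mul_pow_s7 ha0 ha1 hQ0 hQ1).hasSum.rexp.tprod_eq using 3 with n
  have : a * Q ^ n < 1 := (mul_le_of_le_one_right ha0 (pow_le_one₀ hQ0 hQ1.le)).trans_lt ha1
  exact (exp_log (by linarith)).symm

theorem qPochInf_pos_s7 (ha0 : 0 ≤ a) (ha1 : a < 1) (hQ0 : 0 ≤ Q) (hQ1 : Q < 1) :
    0 < qPochInf a Q := by
  rw [qPochInf_eq_exp_tsum ha0 ha1 hQ0 hQ1]
  exact exp_pos _

theorem log_qPochInf_s7 (ha0 : 0 ≤ a) (ha1 : a < 1) (hQ0 : 0 ≤ Q) (hQ1 : Q < 1) :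
    log (qPochInf a Q) = ∑' n : ℕ, log (1 - a * Q ^ n) := by
  rw [qPochInf_eq_exp_tsum ha0 ha1 hQ0 hQ1, log_exp]

theorem qPochInf_eq_one_sub_mul (ha0 : 0 ≤ a) (ha1 : a < 1) (hQ0 : 0 ≤ Q) (hQ1 : Q < 1) :
    qPochInf a Q = (1 - a) * qPochInf (a * Q) Q := by
  have haQ : a * Q < 1 := by nlinarith
  rw [qPochInf_eq_exp_tsum ha0 ha1 hQ0 hQ1, qPochInf_eq_exp_tsum (by positivity) haQ hQ0 hQ1,
    (summable_log_one_sub_mul_pow_s7 ha0 ha1 hQ0 hQ1).tsum_eq_zero_add, exp_add, pow_zero, mul_one,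
    exp_log (by linarith)]
  simp only [pow_succ, mul_assoc, mul_comm Q]

theorem abs_log_qPochInf_le (ha0 : 0 ≤ a) (ha1 : a < 1) (hQ0 : 0 ≤ Q) (hQ1 : Q < 1) :
    |log (qPochInf a Q)| ≤ a / (1 - a) / (1 - Q) := by
  rw [log_qPochInf_s7 ha0 ha1 hQ0 hQ1, div_eq_mul_inv _ (1 - Q)]
  exact tsum_of_norm_bounded ((hasSum_geometric_of_lt_one hQ0 hQ1).mul_left (a / (1 - a)))
    (f := fun n => log (1 - a * Q ^ n)) (abs_log_one_sub_mul_pow_le ha0 ha1 hQ0 hQ1.le)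

theorem tendsto_log_qPochInf_rpow_atTop {q : ℝ} (hq0 : 0 < q) (hq1 : q < 1) (hQ0 : 0 ≤ Q)
    (hQ1 : Q < 1) : Tendsto (fun y : ℝ => log (qPochInf (q ^ y) Q)) atTop (𝓝 0) := by
  have hq : Tendsto (fun y : ℝ => q ^ y) atTop (𝓝 0) :=
    tendsto_rpow_atTop_of_base_lt_one q (by linarith) hq1
  have hbound : Tendsto (fun y : ℝ => q ^ y / (1 - q ^ y) / (1 - Q)) atTop (𝓝 0) := by
    simpa using ((hq.div (tendsto_const_nhds.sub hq) (by simp)).div_const (1 - Q))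
  refine squeeze_zero_norm' ?_ hbound
  filter_upwards [eventually_gt_atTop 0] with y hy
  exact abs_log_qPochInf_le (rpow_nonneg hq0.le y) (rpow_lt_one hq0.le hq1 hy) hQ0 hQ1

end qPochhammer

section qGamma

variable {Q y : ℝ}

theorem qGamma_pos_s7 (hQ0 : 0 < Q) (hQ1 : Q < 1) (hy : 0 < y) : 0 < qGamma Q y := by
  have hQy := rpow_lt_one hQ0.le hQ1 hy
  unfold qGamma
  have := qPochInf_pos_s7 hQ0.le hQ1 hQ0.le hQ1
  have := qPochInf_pos_s7 (rpow_nonneg hQ0.le y) hQy hQ0.le hQ1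
  have : 0 < 1 - Q := by linarith
  positivity

theorem log_qGamma (hQ0 : 0 < Q) (hQ1 : Q < 1) (hy : 0 < y) :
    log (qGamma Q y) =
      log (qPochInf Q Q) - log (qPochInf (Q ^ y) Q) + (1 - y) * log (1 - Q) := by
  have := qPochInf_pos_s7 hQ0.le hQ1 hQ0.le hQ1
  have := qPochInf_pos_s7 (rpow_nonneg hQ0.le y) (rpow_lt_one hQ0.le hQ1 hy) hQ0.le hQ1
  have : 0 < 1 - Q := by linarith
  unfold qGamma
  rw [log_mul (by positivity) (by positivity), log_div (by positivity) (by positivity),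
    log_rpow (by positivity)]

theorem qGamma_add_one (hQ0 : 0 < Q) (hQ1 : Q < 1) (hy : 0 < y) :
    qGamma Q (y + 1) = qBracket Q y * qGamma Q y := by
  have hQy := rpow_lt_one hQ0.le hQ1 hy
  have := qPochInf_pos_s7 (rpow_nonneg hQ0.le (y + 1)) (rpow_lt_one hQ0.le hQ1 (by linarith))
    hQ0.le hQ1
  have : 0 < 1 - Q := by linarith
  have : 0 < 1 - Q ^ y := by linarith
  unfold qGamma qBracket
  rw [qPochInf_eq_one_sub_mul (rpow_nonneg hQ0.le y) hQy hQ0.le hQ1, ← rpow_add_one hQ0.ne',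
    show 1 - y = 1 - (y + 1) + 1 by ring, rpow_add_one (by positivity) (1 - (y + 1))]
  field_simp

theorem tendsto_log_qGamma_add_sub (hQ0 : 0 < Q) (hQ1 : Q < 1) (t : ℝ) :
    Tendsto (fun y => log (qGamma Q (y + t)) - log (qGamma Q y)) atTop
      (𝓝 (-(t * log (1 - Q)))) := by
  have hP := tendsto_log_qPochInf_rpow_atTop hQ0 hQ1 hQ0.le hQ1
  have hPt := hP.comp (tendsto_atTop_add_const_right _ t tendsto_id)
  have hlim : Tendsto (fun y => log (qPochInf (Q ^ y) Q) - log (qPochInf (Q ^ (y + t)) Q)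
      - t * log (1 - Q)) atTop (𝓝 (-(t * log (1 - Q)))) := by
    simpa using (hP.sub hPt).sub_const (t * log (1 - Q))
  refine hlim.congr' ?_
  filter_upwards [eventually_gt_atTop 0, eventually_gt_atTop (-t)] with y hy hyt
  rw [log_qGamma hQ0 hQ1 hy, log_qGamma hQ0 hQ1 (by linarith)]
  ring

end qGamma

section qBracket

variable {q : ℝ}

theorem qBracket_pos (hq0 : 0 < q) (hq1 : q < 1) {x : ℝ} (hx : 0 < x) : 0 < qBracket q x :=
  div_pos (sub_pos.2 (rpow_lt_one hq0.le hq1 hx)) (sub_pos.2 hq1)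

theorem qBracket_rpow_div (hq0 : 0 < q) (hq1 : q ≠ 1) {w : ℝ} (hw : w ≠ 0) (x : ℝ) :
    qBracket (q ^ w) (x / w) = qBracket q x / qBracket q w := by
  have : 1 - q ≠ 0 := sub_ne_zero.2 hq1.symm
  unfold qBracket
  rw [← rpow_mul hq0.le, mul_div_cancel₀ _ hw, div_div_div_cancel_right₀ this]

theorem tendsto_qBracket_atTop (hq0 : 0 < q) (hq1 : q < 1) :
    Tendsto (qBracket q) atTop (𝓝 (1 - q)⁻¹) := by
  unfold qBracket
  have := ((tendsto_rpow_atTop_of_base_lt_one q (by linarith) hq1).const_sub 1).div_const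
    (1 - q)
  simpa only [sub_zero, one_div] using this

end qBracket

noncomputable def qRatio (q : ℝ) {r s : ℕ} (a : Fin r → ℝ) (b : Fin s → ℝ) (x : ℝ) : ℝ :=
  (∏ i, qBracket q (x + a i)) / ∏ j, qBracket q (x + b j)

section qRatio

variable {q x : ℝ} {r s : ℕ} {a : Fin r → ℝ} {b : Fin s → ℝ}

theorem qRatio_pos (hq0 : 0 < q) (hq1 : q < 1) (ha : ∀ i, 0 ≤ a i) (hb : ∀ j, 0 ≤ b j)
    (hx : 0 < x) : 0 < qRatio q a b x :=
  div_pos (Finset.prod_pos fun i _ => qBracket_pos hq0 hq1 (by linarith [ha i]))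
    (Finset.prod_pos fun j _ => qBracket_pos hq0 hq1 (by linarith [hb j]))

theorem log_qRatio (hq0 : 0 < q) (hq1 : q < 1) (ha : ∀ i, 0 ≤ a i) (hb : ∀ j, 0 ≤ b j)
    (hx : 0 < x) :
    log (qRatio q a b x) = ∑ i, log (qBracket q (x + a i)) - ∑ j, log (qBracket q (x + b j)) := by
  have hpa : ∀ i, 0 < qBracket q (x + a i) := fun i => qBracket_pos hq0 hq1 (by linarith [ha i])
  have hpb : ∀ j, 0 < qBracket q (x + b j) := fun j => qBracket_pos hq0 hq1 (by linarith [hb j])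
  rw [qRatio,
    log_div (Finset.prod_pos fun i _ => hpa i).ne' (Finset.prod_pos fun j _ => hpb j).ne',
    log_prod fun i _ => (hpa i).ne', log_prod fun j _ => (hpb j).ne']

theorem tendsto_qRatio_atTop (hq0 : 0 < q) (hq1 : q < 1) :
    Tendsto (qRatio q a b) atTop (𝓝 ((1 - q)⁻¹ ^ r / (1 - q)⁻¹ ^ s)) := by
  have hB : ∀ c : ℝ, Tendsto (fun y => qBracket q (y + c)) atTop (𝓝 (1 - q)⁻¹) := fun c =>
    (tendsto_qBracket_atTop hq0 hq1).comp (tendsto_atTop_add_const_right _ c tendsto_id)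
  have := (tendsto_finsetProd Finset.univ fun i _ => hB (a i)).div
    (tendsto_finsetProd Finset.univ fun j _ => hB (b j))
    (Finset.prod_ne_zero_iff.2 fun _ _ => inv_ne_zero (sub_ne_zero.2 hq1.ne'))
  simp only [Finset.prod_const, Finset.card_univ, Fintype.card_fin] at this
  exact this

end qRatio

section mainSol

variable {q w k x : ℝ} {r s : ℕ} {a : Fin r → ℝ} {b : Fin s → ℝ}

theorem qGamma_rpow_div_pos (hq0 : 0 < q) (hq1 : q < 1) (hw : 0 < w) {y : ℝ} (hy : 0 < y) :
    0 < qGamma (q ^ w) (y / w) :=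
  qGamma_pos_s7 (rpow_pos_of_pos hq0 w) (rpow_lt_one hq0.le hq1 hw) (div_pos hy hw)

theorem mainSol_pos (hq0 : 0 < q) (hq1 : q < 1) (hw : 0 < w) (ha : ∀ i, 0 ≤ a i)
    (hb : ∀ j, 0 ≤ b j) (hx : 0 < x) : 0 < mainSol q w k r s a b x := by
  have hΓ : ∀ c, 0 ≤ c → ∀ y > 0, 0 < qGamma (q ^ w) ((y + c) / w) := fun c hc y hy =>
    qGamma_rpow_div_pos hq0 hq1 hw (by linarith)
  refine rpow_pos_of_pos (mul_pos (mul_pos ?_ ?_) (rpow_pos_of_pos (qBracket_pos hq0 hq1 hw) _)) k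
  · exact Finset.prod_pos fun j _ => div_pos (hΓ _ (ha j) x hx) (hΓ _ (ha j) w hw)
  · exact Finset.prod_pos fun i _ => div_pos (hΓ _ (hb i) w hw) (hΓ _ (hb i) x hx)

theorem mainSol_self (hq0 : 0 < q) (hq1 : q < 1) (hw : 0 < w) (ha : ∀ i, 0 ≤ a i)
    (hb : ∀ j, 0 ≤ b j) : mainSol q w k r s a b w = 1 := by
  have hΓ : ∀ c, 0 ≤ c → qGamma (q ^ w) ((w + c) / w) ≠ 0 := fun c hc =>
    (qGamma_rpow_div_pos hq0 hq1 hw (by linarith)).ne'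
  unfold mainSol
  rw [Finset.prod_eq_one fun j _ => div_self (hΓ _ (ha j)),
    Finset.prod_eq_one fun i _ => div_self (hΓ _ (hb i)), div_self hw.ne', sub_self, mul_zero,
    rpow_zero, one_mul, one_mul, one_rpow]

theorem log_mainSol (hq0 : 0 < q) (hq1 : q < 1) (hw : 0 < w) (ha : ∀ i, 0 ≤ a i)
    (hb : ∀ j, 0 ≤ b j) (hx : 0 < x) :
    log (mainSol q w k r s a b x) =
      k * (∑ j, (log (qGamma (q ^ w) ((x + a j) / w)) - log (qGamma (q ^ w) ((w + a j) / w)))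
        + ∑ i, (log (qGamma (q ^ w) ((w + b i) / w)) - log (qGamma (q ^ w) ((x + b i) / w)))
        + ((r : ℝ) - s) * (x / w - 1) * log (qBracket q w)) := by
  have hΓ : ∀ c, 0 ≤ c → ∀ y > 0, 0 < qGamma (q ^ w) ((y + c) / w) := fun c hc y hy =>
    qGamma_rpow_div_pos hq0 hq1 hw (by linarith)
  have hA : ∀ j, 0 < qGamma (q ^ w) ((x + a j) / w) / qGamma (q ^ w) ((w + a j) / w) :=
    fun j => div_pos (hΓ _ (ha j) x hx) (hΓ _ (ha j) w hw)
  have hB : ∀ i, 0 < qGamma (q ^ w) ((w + b i) / w) / qGamma (q ^ w) ((x + b i) / w) :=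
    fun i => div_pos (hΓ _ (hb i) w hw) (hΓ _ (hb i) x hx)
  have hbr := qBracket_pos hq0 hq1 hw
  have hPA := Finset.prod_pos fun j (_ : j ∈ Finset.univ) => hA j
  have hPB := Finset.prod_pos fun i (_ : i ∈ Finset.univ) => hB i
  unfold mainSol
  rw [log_rpow (by positivity), log_mul (by positivity) (by positivity),
    log_mul hPA.ne' hPB.ne', log_prod fun j _ => (hA j).ne', log_prod fun i _ => (hB i).ne',
    log_rpow hbr,
    Finset.sum_congr rfl fun j _ => log_div (hΓ _ (ha j) x hx).ne' (hΓ _ (ha j) w hw).ne',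
    Finset.sum_congr rfl fun i _ => log_div (hΓ _ (hb i) w hw).ne' (hΓ _ (hb i) x hx).ne']

theorem log_mainSol_add_sub (hq0 : 0 < q) (hq1 : q < 1) (hw : 0 < w) (ha : ∀ i, 0 ≤ a i)
    (hb : ∀ j, 0 ≤ b j) (hx : 0 < x) {t : ℝ} (ht : 0 < t) :
    log (mainSol q w k r s a b (x + t)) - log (mainSol q w k r s a b x) =
      k * (∑ j, (log (qGamma (q ^ w) ((x + a j) / w + t / w))
            - log (qGamma (q ^ w) ((x + a j) / w)))
        - ∑ i, (log (qGamma (q ^ w) ((x + b i) / w + t / w))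
            - log (qGamma (q ^ w) ((x + b i) / w)))
        + ((r : ℝ) - s) * (t / w) * log (qBracket q w)) := by
  have hshift : ∀ c, (x + t + c) / w = (x + c) / w + t / w := fun c => by ring
  rw [log_mainSol hq0 hq1 hw ha hb (by linarith), log_mainSol hq0 hq1 hw ha hb hx]
  simp only [hshift, Finset.sum_sub_distrib]
  ring

theorem log_mainSol_add_period (hq0 : 0 < q) (hq1 : q < 1) (hw : 0 < w) (ha : ∀ i, 0 ≤ a i)
    (hb : ∀ j, 0 ≤ b j) (hx : 0 < x) :
    log (mainSol q w k r s a b (x + w)) - log (mainSol q w k r s a b x) =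
      k * log (qRatio q a b x) := by
  have hstep : ∀ c, 0 ≤ c → log (qGamma (q ^ w) ((x + c) / w + w / w))
      - log (qGamma (q ^ w) ((x + c) / w)) = log (qBracket q (x + c)) - log (qBracket q w) := by
    intro c hc
    have hxc : 0 < x + c := by linarith
    rw [div_self hw.ne', qGamma_add_one (rpow_pos_of_pos hq0 w) (rpow_lt_one hq0.le hq1 hw)
      (div_pos hxc hw), log_mul (qBracket_pos (rpow_pos_of_pos hq0 w) (rpow_lt_one hq0.le hq1 hw)
      (div_pos hxc hw)).ne' (qGamma_rpow_div_pos hq0 hq1 hw hxc).ne', add_sub_cancel_right,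
      qBracket_rpow_div hq0 hq1.ne hw.ne',
      log_div (qBracket_pos hq0 hq1 hxc).ne' (qBracket_pos hq0 hq1 hw).ne']
  rw [log_mainSol_add_sub hq0 hq1 hw ha hb hx hw, log_qRatio hq0 hq1 ha hb hx,
    Finset.sum_congr rfl fun j _ => hstep _ (ha j), Finset.sum_congr rfl fun i _ => hstep _ (hb i)]
  simp only [Finset.sum_sub_distrib, Finset.sum_const, Finset.card_univ, Fintype.card_fin,
    nsmul_eq_mul, div_self hw.ne']
  ring

theorem tendsto_log_mainSol_add_sub (hq0 : 0 < q) (hq1 : q < 1) (hw : 0 < w)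
    (ha : ∀ i, 0 ≤ a i) (hb : ∀ j, 0 ≤ b j) {t : ℝ} (ht : 0 < t) :
    Tendsto (fun y => log (mainSol q w k r s a b (y + t)) - log (mainSol q w k r s a b y))
      atTop (𝓝 (t / w * (k * log ((1 - q)⁻¹ ^ r / (1 - q)⁻¹ ^ s)))) := by
  have hL : ∀ c, Tendsto (fun y => log (qGamma (q ^ w) ((y + c) / w + t / w))
      - log (qGamma (q ^ w) ((y + c) / w))) atTop (𝓝 (-(t / w * log (1 - q ^ w)))) := fun c =>
    (tendsto_log_qGamma_add_sub (rpow_pos_of_pos hq0 w) (rpow_lt_one hq0.le hq1 hw) (t / w)).comp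
      ((tendsto_atTop_add_const_right _ c tendsto_id).atTop_div_const hw)
  have hlim := (((tendsto_finsetSum Finset.univ fun j _ => hL (a j)).sub
    (tendsto_finsetSum Finset.univ fun i _ => hL (b i))).add_const
    (((r : ℝ) - s) * (t / w) * log (qBracket q w))).const_mul k
  convert hlim.congr' ?_ using 2
  · have h1q : (1 : ℝ) - q ≠ 0 := sub_ne_zero.2 hq1.ne'
    rw [qBracket, log_div (sub_pos.2 (rpow_lt_one hq0.le hq1 hw)).ne' h1q,
      log_div (pow_ne_zero _ (inv_ne_zero h1q)) (pow_ne_zero _ (inv_ne_zero h1q))]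
    simp only [Finset.sum_const, Finset.card_univ, Fintype.card_fin, nsmul_eq_mul, log_pow,
      log_inv]
    ring
  · filter_upwards [eventually_gt_atTop 0] with y hy
    exact (log_mainSol_add_sub hq0 hq1 hw ha hb hy ht).symm

end mainSol

theorem stmt7_general (q w k : ℝ) (hq0 : 0 < q) (hq1 : q < 1) (hw : 0 < w) (r s : ℕ)
    (a : Fin r → ℝ) (b : Fin s → ℝ) (ha : ∀ i, 0 ≤ a i) (hb : ∀ j, 0 ≤ b j)
    (f : ℝ → ℝ) (hpos : ∀ x > 0, 0 < f x)
    (hfe : ∀ x > 0, f (x + w) =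
      ((∏ i, qBracket q (x + a i)) / ∏ j, qBracket q (x + b j)) ^ k * f x)
    (hfw : f w = 1)
    (M : ℝ)
    (hconv : ConvexOn ℝ (Ioi M) (fun x => Real.log (f x)) ∨
             ConcaveOn ℝ (Ioi M) (fun x => Real.log (f x))) :
    ∀ x > 0, f x = mainSol q w k r s a b x := by
  have hf_period : ∀ y > 0, log (f (y + w)) - log (f y) = k * log (qRatio q a b y) := by
    intro y hy
    have hR := qRatio_pos hq0 hq1 ha hb hy
    rw [hfe y hy, ← qRatio, log_mul (rpow_pos_of_pos hR k).ne' (hpos y hy).ne', log_rpow hR]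
    ring
  have hf_lim : ∀ t > 0, Tendsto (fun y => log (f (y + t)) - log (f y)) atTop
      (𝓝 (t / w * (k * log ((1 - q)⁻¹ ^ r / (1 - q)⁻¹ ^ s)))) := by
    have h1q : 0 < (1 - q)⁻¹ := inv_pos.2 (sub_pos.2 hq1)
    have hinc : Tendsto (fun y => log (f (y + w)) - log (f y)) atTop
        (𝓝 (k * log ((1 - q)⁻¹ ^ r / (1 - q)⁻¹ ^ s))) :=
      (((continuousAt_log (by positivity)).tendsto.comp (tendsto_qRatio_atTop hq0 hq1)).const_mul
        k).congr' (by filter_upwards [eventually_gt_atTop 0] with y hy using (hf_period y hy).symm)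
    intro t ht
    rcases hconv with h | h
    exacts [h.tendsto_add_sub_of_tendsto_add_period_sub hw ht hinc,
      h.tendsto_add_sub_of_tendsto_add_period_sub hw ht hinc]
  have hlog_eq := eq_of_add_period_eq_of_tendsto_add_sub
    (φ := fun y => log (f y) - log (mainSol q w k r s a b y)) hw
    (fun y hy => by linarith [hf_period y hy, log_mainSol_add_period (k := k) hq0 hq1 hw ha hb hy])
    (fun t ht => by
      have := (hf_lim t ht).sub (tendsto_log_mainSol_add_sub (k := k) hq0 hq1 hw ha hb ht)
      rw [sub_self] at this
      exact this.congr fun y => by ring)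
  intro x hx
  have := hlog_eq x hx
  rw [hfw, mainSol_self hq0 hq1 hw ha hb, log_one, sub_self, sub_eq_zero] at this
  exact log_injOn_pos (hpos x hx) (mainSol_pos hq0 hq1 hw ha hb hx) this

theorem stmt7 (q w k : ℝ) (hq0 : 0 < q) (hq1 : q < 1) (hw : 0 < w) (r s : ℕ)
    (a : Fin r → ℝ) (b : Fin s → ℝ) (ha : ∀ i, 0 ≤ a i) (hb : ∀ j, 0 ≤ b j)
    (f : ℝ → ℝ) (hpos : ∀ x > 0, 0 < f x)
    (hfe : ∀ x > 0, f (x + w) =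
      ((∏ i, qBracket q (x + a i)) / ∏ j, qBracket q (x + b j)) ^ k * f x)
    (hfw : f w = 1)
    (M : ℝ) (hM : 0 ≤ M)
    (hconv : ConvexOn ℝ (Ioi M) (fun x => Real.log (f x)) ∨
             ConcaveOn ℝ (Ioi M) (fun x => Real.log (f x))) :
    ∀ x > 0, f x = mainSol q w k r s a b x :=
  stmt7_general q w k hq0 hq1 hw r s a b ha hb f hpos hfe hfw M hconv
end
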